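/- Let κ > 0, α = 1/4, and h as above. Then limsup_{t→+∞} (t - h(t))/log h(t) ≤ κ/16. Moreover, for 0 < α < 1/4, limsup_{t→+∞} (t - h(t))/log h(t) ≤ 0. -/

import Mathlib

open Real Filter MeasureTheory Set

/-- The change-of-variable function `g` (inverse of `h`). -/
noncomputable def gfun (κ α : ℝ) (u : ℝ) : ℝ :=
  ∫ s in (0:ℝ)..u, Real.sqrt (1 + 2*κ*α^2 * |s| ^ (2*(2*α-1)))

/-!
By `√(1 + x) ≤ 1 + x / 2`, on `[1, ∞)` the integrand of `g` exceeds `1` by at most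
`κ α² s^(2(2α-1))`, so `g u - u ≤ C + κ α² ∫₁ᵘ s^(4α-2) ds`. For `α = 1/4` this is
`C + (κ/16) log u`; for `α < 1/4` the integral stays bounded. Since `g` is monotone, `h t → ∞`,
and substituting `u = h t`, `g u = t` turns this into the bound on `(t - h t) / log (h t)`.
-/

open Topology

theorem intervalIntegrable_abs_rpow {r : ℝ} (hr : -1 < r) (a b : ℝ) :
    IntervalIntegrable (fun x => |x| ^ r) volume a b := by
  have hpos : ∀ c, 0 ≤ c → IntervalIntegrable (fun x => |x| ^ r) volume 0 c := fun c hc =>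
    (intervalIntegral.intervalIntegrable_rpow' hr).congr_uIoo fun x hx => by
      rw [uIoo_of_le hc] at hx
      simp [abs_of_pos hx.1]
  suffices ∀ c, IntervalIntegrable (fun x => |x| ^ r) volume 0 c from (this a).symm.trans (this b)
  intro c
  rcases le_total 0 c with hc | hc
  · exact hpos c hc
  · rw [IntervalIntegrable.iff_comp_neg]
    simpa using hpos (-c) (neg_nonneg.2 hc)

theorem sqrt_one_add_mul_sq_le {c y : ℝ} (hc : 0 ≤ c) (hy : 0 ≤ y) :
    √(1 + c * y ^ 2) ≤ 1 + √c * y := by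
  rw [Real.sqrt_le_iff]
  refine ⟨by positivity, ?_⟩
  nlinarith [Real.sq_sqrt hc, Real.sqrt_nonneg c, mul_nonneg (Real.sqrt_nonneg c) hy]

section Density

variable {c r : ℝ}

theorem sqrt_one_add_mul_abs_rpow_le (hc : 0 ≤ c) (s : ℝ) :
    √(1 + c * |s| ^ (2 * r)) ≤ 1 + √c * |s| ^ r := by
  have hsq : |s| ^ (2 * r) = (|s| ^ r) ^ 2 := by
    rw [mul_comm, Real.rpow_mul (abs_nonneg s), Real.rpow_two]
  rw [hsq]
  exact sqrt_one_add_mul_sq_le hc (by positivity)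

theorem intervalIntegrable_sqrt_one_add_mul_abs_rpow (hc : 0 ≤ c) (hr : -1 < r) (a b : ℝ) :
    IntervalIntegrable (fun s => √(1 + c * |s| ^ (2 * r))) volume a b := by
  refine ((intervalIntegrable_const (c := 1)).add
    ((intervalIntegrable_abs_rpow hr a b).const_mul √c)).mono_fun'
    (Measurable.aestronglyMeasurable (by fun_prop)) (ae_of_all _ fun s =>
      (Real.norm_of_nonneg (Real.sqrt_nonneg _)).trans_le (sqrt_one_add_mul_abs_rpow_le hc s))

end Density

theorem integral_rpow_le_of_lt_neg_one {p : ℝ} (hp : p < -1) {u : ℝ} (hu : 1 ≤ u) :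
    ∫ s in (1:ℝ)..u, s ^ p ≤ -1 / (p + 1) := by
  rw [integral_rpow (Or.inr ⟨hp.ne, fun h0 => by rw [uIcc_of_le hu] at h0; linarith [h0.1]⟩),
    Real.one_rpow, sub_div, neg_div]
  have := div_nonpos_of_nonneg_of_nonpos (Real.rpow_nonneg (by linarith : (0:ℝ) ≤ u) (p + 1))
    (by linarith : p + 1 ≤ 0)
  linarith

theorem tendsto_atTop_of_rightInverse {α β : Type*} [LinearOrder α] [Preorder β] [NoMaxOrder β]
    {g : α → β} {h : β → α} (hg : Monotone g) (hh : Function.RightInverse h g) :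
    Tendsto h atTop atTop := by
  refine tendsto_atTop.2 fun N =>
    (eventually_gt_atTop (g N)).mono fun t ht => le_of_not_gt fun hlt => ?_
  have := hg hlt.le
  rw [hh t] at this
  exact this.not_gt ht

theorem eventually_div_log_le {φ : ℝ → ℝ} {A B : ℝ}
    (hφ : ∀ᶠ u in atTop, φ u ≤ A + B * log u) {ε : ℝ} (hε : 0 < ε) :
    ∀ᶠ u in atTop, φ u / log u ≤ B + ε := by
  have hA : Tendsto (fun u => A / log u) atTop (𝓝 0) :=
    tendsto_const_nhds.div_atTop tendsto_log_atTop
  filter_upwards [hφ, hA.eventually (ge_mem_nhds hε), tendsto_log_atTop.eventually_gt_atTop 0]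
    with u hu hAu hlog
  rw [div_le_iff₀ hlog] at hAu ⊢
  linarith

theorem eventually_sub_div_log_le_of_rightInverse {g h : ℝ → ℝ} (hg : Monotone g)
    (hh : Function.RightInverse h g) {A B : ℝ} (hgu : ∀ᶠ u in atTop, g u - u ≤ A + B * log u)
    {ε : ℝ} (hε : 0 < ε) : ∀ᶠ t in atTop, (t - h t) / log (h t) ≤ B + ε := by
  filter_upwards [(tendsto_atTop_of_rightInverse hg hh).eventually (eventually_div_log_le hgu hε)]
    with t ht
  rwa [hh t] at ht

section Gfun

variable {κ α : ℝ}

theorem gfun_sub_gfun (hκ : 0 ≤ κ) (hα : 0 < α) (a b : ℝ) :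
    gfun κ α b - gfun κ α a = ∫ s in a..b, √(1 + 2*κ*α^2 * |s| ^ (2*(2*α-1))) :=
  have hI := intervalIntegrable_sqrt_one_add_mul_abs_rpow (c := 2*κ*α^2) (r := 2*α-1)
    (by positivity) (by linarith)
  intervalIntegral.integral_interval_sub_left (hI 0 b) (hI 0 a)

theorem monotone_gfun (hκ : 0 ≤ κ) (hα : 0 < α) : Monotone (gfun κ α) := fun a b hab => by
  have := intervalIntegral.integral_nonneg (μ := volume) hab fun s _ =>
    Real.sqrt_nonneg (1 + 2*κ*α^2 * |s| ^ (2*(2*α-1)))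
  linarith [gfun_sub_gfun hκ hα a b]

theorem gfun_sub_self_le (hκ : 0 ≤ κ) (hα : 0 < α) {u : ℝ} (hu : 1 ≤ u) :
    gfun κ α u - u ≤ gfun κ α 1 - 1 + κ * α ^ 2 * ∫ s in (1:ℝ)..u, s ^ (2*(2*α-1)) := by
  have hpow : IntervalIntegrable (fun s : ℝ => s ^ (2*(2*α-1))) volume 1 u :=
    intervalIntegral.intervalIntegrable_rpow (Or.inr fun h0 => by
      rw [uIcc_of_le hu] at h0
      linarith [h0.1])
  have hle : ∫ s in (1:ℝ)..u, √(1 + 2*κ*α^2 * |s| ^ (2*(2*α-1)))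
      ≤ ∫ s in (1:ℝ)..u, (1 + κ * α ^ 2 * s ^ (2*(2*α-1))) := by
    refine intervalIntegral.integral_mono_on hu
      (intervalIntegrable_sqrt_one_add_mul_abs_rpow (by positivity) (by linarith) 1 u)
      ((intervalIntegrable_const (c := 1)).add (hpow.const_mul _)) fun s hs => ?_
    have := Real.sqrt_one_add_le (x := 2*κ*α^2 * |s| ^ (2*(2*α-1)))
      (neg_one_lt_zero.le.trans (by positivity))
    rw [abs_of_nonneg (by linarith [hs.1])] at this ⊢
    linarith
  rw [intervalIntegral.integral_add intervalIntegrable_const (hpow.const_mul _),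
    intervalIntegral.integral_const_mul, intervalIntegral.integral_const, smul_eq_mul, mul_one] at hle
  linarith [gfun_sub_gfun hκ hα 1 u]

end Gfun

theorem stmt15 (κ : ℝ) (hκ : 0 < κ) :
    (∀ h : ℝ → ℝ, Function.LeftInverse h (gfun κ (1/4)) →
      Function.RightInverse h (gfun κ (1/4)) →
      ∀ ε > (0:ℝ), ∀ᶠ t in Filter.atTop, (t - h t) / Real.log (h t) ≤ κ/16 + ε) ∧
    (∀ α : ℝ, 0 < α → α < 1/4 → ∀ h : ℝ → ℝ, Function.LeftInverse h (gfun κ α) →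
      Function.RightInverse h (gfun κ α) →
      ∀ ε > (0:ℝ), ∀ᶠ t in Filter.atTop, (t - h t) / Real.log (h t) ≤ 0 + ε) := by
  refine ⟨fun h _ hh ε hε => ?_, fun α hα hα' h _ hh ε hε => ?_⟩
  · have hα : (0:ℝ) < 1/4 := by norm_num
    refine eventually_sub_div_log_le_of_rightInverse (monotone_gfun hκ.le hα) hh
      (A := gfun κ (1/4) 1 - 1) ?_ hε
    filter_upwards [eventually_ge_atTop 1] with u hu
    have hlog : ∫ s in (1:ℝ)..u, s ^ (2*(2*(1/4:ℝ)-1)) = log u := by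
      norm_num [Real.rpow_neg_one, integral_inv_of_pos one_pos (by linarith : (0:ℝ) < u)]
    have := gfun_sub_self_le hκ.le hα hu
    rw [hlog] at this
    linarith
  · refine eventually_sub_div_log_le_of_rightInverse (monotone_gfun hκ.le hα) hh
      (A := gfun κ α 1 - 1 + κ * α ^ 2 * (-1 / (2*(2*α-1) + 1))) ?_ hε
    filter_upwards [eventually_ge_atTop 1] with u hu
    calc gfun κ α u - u ≤ gfun κ α 1 - 1 + κ * α ^ 2 * ∫ s in (1:ℝ)..u, s ^ (2*(2*α-1)) :=
          gfun_sub_self_le hκ.le hα hu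
      _ ≤ gfun κ α 1 - 1 + κ * α ^ 2 * (-1 / (2*(2*α-1) + 1)) := by
          gcongr
          exact integral_rpow_le_of_lt_neg_one (by linarith) hu
      _ = _ := by ring
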